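/- Let C be a Λ-MT code over F_q with index ℓ, block lengths (m_1,…,m_ℓ), GPM G, and identical-equation matrix A (so A·G = diag(x^{m_i}−λ_i)). Suppose m_i = m_{ℓ−i+1} and λ_i = λ_{ℓ−i+1}^{−1} for all 1 ≤ i ≤ ℓ. Assume each entry in the j-th column of G has degree at most m_j, and let N = lcm(t_1 m_1,…,t_ℓ m_ℓ). Then C is reversible (i.e., C equals its reversed code) if and only if G(1/x)·diag(x^{m_i})·J_ℓ·diag((x^N−1)/(x^{m_i}−λ_i))·A ≡ 0 (mod x^N−1), where J_ℓ is the ℓ×ℓ backward identity matrix. -/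

import Mathlib

open Polynomial Matrix

/-- constacyclic shift with constant `lam` on one block of length `m`:
`(a₀, …, a_{m-1}) ↦ (lam * a_{m-1}, a₀, …, a_{m-2})`. -/
def blockShift {F : Type*} [Field F] (lam : F) {m : ℕ} (a : Fin m → F) : Fin m → F :=
  fun j => if j.val = 0 then lam * a ⟨m - 1, by have := j.isLt; omega⟩
           else a ⟨j.val - 1, by have := j.isLt; omega⟩

/-- `CC ⊆ ⊕ᵢ F^{m i}` is a Λ-multi-twisted code: it is invariant under the blockwise
constacyclic shift `T_Λ`. -/
def IsMT {F : Type*} [Field F] {ℓ : ℕ} (lam : Fin ℓ → F) {m : Fin ℓ → ℕ}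
    (CC : Submodule F (∀ i, Fin (m i) → F)) : Prop :=
  ∀ v ∈ CC, (fun i => blockShift (lam i) (v i)) ∈ CC

/-- from a polynomial vector in `(F[x])^ℓ` to a blocked vector: reduce component `i`
modulo `x^{m i} - λᵢ` and take the coefficients. -/
noncomputable def toCode {F : Type*} [Field F] {ℓ : ℕ} (lam : Fin ℓ → F) (m : Fin ℓ → ℕ)
    (q : Fin ℓ → Polynomial F) : ∀ i, Fin (m i) → F :=
  fun i j => ((q i) %ₘ (X ^ (m i) - Polynomial.C (lam i))).coeff j

/-- `G` is a generator polynomial matrix (GPM) of the Λ-MT code `CC`: its rows form a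
minimal generating set (equivalently, since the corresponding submodule of `(F[x])^ℓ` has
rank `ℓ`, a linearly independent generating set) of the `F[x]`-submodule of `(F[x])^ℓ`
corresponding to `CC`, namely `{q | toCode lam m q ∈ CC}`. -/
def IsGPM {F : Type*} [Field F] {ℓ : ℕ} (lam : Fin ℓ → F) (m : Fin ℓ → ℕ)
    (CC : Submodule F (∀ i, Fin (m i) → F))
    (G : Matrix (Fin ℓ) (Fin ℓ) (Polynomial F)) : Prop :=
  LinearIndependent (Polynomial F) (fun i => G i) ∧
  (Submodule.span (Polynomial F) (Set.range (fun i => G i)) :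
      Set (Fin ℓ → Polynomial F)) = {q | toCode lam m q ∈ CC}

/-- coordinate reversal of a blocked vector as a linear endomorphism, available when the
block lengths are palindromic (`m i = m (rev i)`): block `i` of the result is the
reversal of block `ℓ-1-i` of the input. -/
def revWhole {F : Type*} [Field F] {ℓ : ℕ} {m : Fin ℓ → ℕ} (hmm : ∀ i, m i = m i.rev) :
    (∀ i, Fin (m i) → F) →ₗ[F] (∀ i, Fin (m i) → F) where
  toFun v := fun i j => v i.rev (Fin.rev (Fin.cast (hmm i) j))
  map_add' _ _ := rfl
  map_smul' _ _ := rfl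

/-!
Put `c = X^N - 1` and `B = diag(c / (X^{mᵢ} - λᵢ)) · A`, so that `B · G = c · 1`. As the rows of
`G` are independent, a polynomial vector `q` lies in their span iff `c` divides every entry of
`q · B`. On codewords, reversal followed by one shift `T_Λ` is the blockwise reflection
`qᵢ ↦ x^{mᵢ} q_{ℓ+1-i}(1/x)` of polynomial representatives of degree at most `mᵢ` (because
`λᵢ λ_{ℓ+1-i} = 1`), and `T_Λ` conjugates the reversal into its inverse. Hence the vectors whose
reversal lies in `C` form an `F[x]`-submodule, `C` is reversible iff the reflected rows of `G`
lie in the row span of `G`, and that is the divisibility condition.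
-/

namespace Polynomial

variable {F : Type*} [Field F] {m : ℕ}

theorem modByMonic_X_pow_sub_C_of_natDegree_le (hm : 0 < m) (μ : F) {q : F[X]}
    (hq : q.natDegree ≤ m) : q %ₘ (X ^ m - C μ) = q - C (q.coeff m) * (X ^ m - C μ) := by
  refine (div_modByMonic_unique (C (q.coeff m)) _ (monic_X_pow_sub_C μ hm.ne') ⟨by ring, ?_⟩).2
  rw [degree_X_pow_sub_C hm, degree_lt_iff_coeff_zero]
  intro k hk
  rcases hk.eq_or_lt with rfl | hk
  · simp [coeff_X_pow, coeff_C, hm.ne']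
  · simp [coeff_X_pow, coeff_C, hk.ne', (hm.trans hk).ne',
      coeff_eq_zero_of_natDegree_lt (hq.trans_lt hk)]

theorem coeff_modByMonic_X_pow_sub_C_of_natDegree_le (hm : 0 < m) (μ : F) {q : F[X]}
    (hq : q.natDegree ≤ m) {j : ℕ} (hj : j < m) :
    (q %ₘ (X ^ m - C μ)).coeff j = if j = 0 then q.coeff 0 + μ * q.coeff m else q.coeff j := by
  rw [modByMonic_X_pow_sub_C_of_natDegree_le hm μ hq]
  split_ifs with h
  · subst h
    simp only [coeff_sub, mul_coeff_zero, coeff_C, coeff_X_pow, if_pos, hm.ne, if_false,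
      zero_sub, mul_neg, sub_neg_eq_add]
    ring
  · simp [coeff_X_pow, coeff_C, h, hj.ne]

theorem coeff_reflect_modByMonic_X_pow_sub_C (hm : 0 < m) {μ : F} (hμ : μ ≠ 0) {q : F[X]}
    (hq : q.natDegree ≤ m) {j : ℕ} (hj : j < m) :
    ((reflect m q) %ₘ (X ^ m - C μ⁻¹)).coeff j =
      if j = 0 then μ⁻¹ * (q %ₘ (X ^ m - C μ)).coeff 0
      else (q %ₘ (X ^ m - C μ)).coeff (m - j) := by
  have hrq : (reflect m q).natDegree ≤ m := by
    rw [natDegree_le_iff_coeff_eq_zero]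
    intro k hk
    rw [coeff_reflect, revAt_eq_self_of_lt hk]
    exact coeff_eq_zero_of_natDegree_lt (hq.trans_lt hk)
  rw [coeff_modByMonic_X_pow_sub_C_of_natDegree_le hm _ hrq hj]
  split_ifs with h
  · subst h
    rw [coeff_modByMonic_X_pow_sub_C_of_natDegree_le hm _ hq hm, if_pos rfl, coeff_reflect,
      coeff_reflect, revAt_le hm.le, revAt_le le_rfl, Nat.sub_zero, Nat.sub_self]
    field_simp
    ring
  · rw [coeff_modByMonic_X_pow_sub_C_of_natDegree_le hm _ hq (by omega), if_neg (by omega),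
      coeff_reflect, revAt_le hj.le]

theorem coeff_X_mul_modByMonic_X_pow_sub_C (hm : 0 < m) (μ : F) (q : F[X]) {j : ℕ}
    (hj : j < m) :
    ((X * q) %ₘ (X ^ m - C μ)).coeff j =
      if j = 0 then μ * (q %ₘ (X ^ m - C μ)).coeff (m - 1)
      else (q %ₘ (X ^ m - C μ)).coeff (j - 1) := by
  have hmonic : (X ^ m - C μ).Monic := monic_X_pow_sub_C μ hm.ne'
  set r := q %ₘ (X ^ m - C μ)
  have hr : r.degree < m := by
    simpa [degree_X_pow_sub_C hm] using degree_modByMonic_lt q hmonic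
  obtain ⟨n, rfl⟩ : ∃ n, m = n + 1 := ⟨m - 1, by omega⟩
  have hXr : (X * r).natDegree ≤ n + 1 := by
    rw [natDegree_le_iff_coeff_eq_zero]
    rintro (_ | k) hk
    · simp at hk
    · rw [coeff_X_mul]
      exact coeff_eq_zero_of_degree_lt (hr.trans_le (by exact_mod_cast (by omega : n + 1 ≤ k)))
  have hmod : (X * q) %ₘ (X ^ (n + 1) - C μ) = (X * r) %ₘ (X ^ (n + 1) - C μ) := by
    rw [mul_modByMonic, mul_modByMonic X r, (modByMonic_eq_self_iff hmonic).2
      (degree_modByMonic_lt q hmonic)]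
  rw [hmod, coeff_modByMonic_X_pow_sub_C_of_natDegree_le hm μ hXr hj]
  rcases j with _ | j
  · simp
  · simp [coeff_X_mul]

theorem X_pow_sub_C_dvd_X_pow_sub_one {R : Type*} [CommRing R] {μ : R} {m N : ℕ}
    (h : orderOf μ * m ∣ N) : X ^ m - C μ ∣ (X ^ N - 1 : R[X]) := by
  have hμ : (C μ) ^ orderOf μ = 1 := by rw [← C_pow, pow_orderOf_eq_one, C_1]
  calc X ^ m - C μ ∣ (X ^ m) ^ orderOf μ - (C μ) ^ orderOf μ := sub_dvd_pow_sub_pow _ _ _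
    _ = X ^ (orderOf μ * m) - 1 := by rw [hμ, ← pow_mul, mul_comm]
    _ ∣ X ^ N - 1 := by
      obtain ⟨k, rfl⟩ := h
      simpa [pow_mul] using sub_dvd_pow_sub_pow (X ^ (orderOf μ * m) : R[X]) 1 k

end Polynomial

namespace Matrix

variable {R ι : Type*} [CommRing R] [Fintype ι] [DecidableEq ι]

theorem mul_eq_smul_one_of_mul_eq_smul_one {G B : Matrix ι ι R} {c : R}
    (hG : LinearIndependent R G.row) (hBG : B * G = c • 1) : G * B = c • 1 := by
  have hreg : IsRightRegular G :=
    isRightRegular_iff_vecMul_injective.2 (vecMul_injective_iff.2 hG)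
  apply hreg
  change G * B * G = c • 1 * G
  rw [Matrix.mul_assoc, hBG, Matrix.mul_smul, Matrix.smul_mul, Matrix.mul_one, Matrix.one_mul]

theorem mem_span_row_iff_dvd_vecMul [IsDomain R] {G B : Matrix ι ι R} {c : R} (hc : c ≠ 0)
    (hG : LinearIndependent R G.row) (hBG : B * G = c • 1) (q : ι → R) :
    q ∈ Submodule.span R (Set.range G.row) ↔ ∀ j, c ∣ (q ᵥ* B) j := by
  rw [← range_vecMulLinear, LinearMap.mem_range]
  constructor
  · rintro ⟨u, rfl⟩ j
    rw [vecMulLinear_apply, vecMul_vecMul, mul_eq_smul_one_of_mul_eq_smul_one hG hBG,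
      vecMul_smul, vecMul_one]
    exact dvd_mul_right c (u j)
  · intro h
    choose w hw using h
    refine ⟨w, funext fun j => mul_left_cancel₀ hc ?_⟩
    have hcq : c • q = (c • w) ᵥ* G := by
      calc c • q = q ᵥ* (B * G) := by rw [hBG, vecMul_smul, vecMul_one]
        _ = (c • w) ᵥ* G := by rw [← vecMul_vecMul]; exact congrArg (· ᵥ* G) (funext hw)
    simpa [smul_vecMul] using (congrFun hcq j).symm

end Matrix

namespace Submodule

theorem map_eq_self_iff_of_involutive {R M : Type*} [Semiring R] [AddCommMonoid M] [Module R M]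
    {f : M →ₗ[R] M} (hf : Function.Involutive f) {p : Submodule R M} :
    p.map f = p ↔ ∀ v ∈ p, f v ∈ p :=
  ⟨fun h _ hv => h ▸ mem_map_of_mem hv,
    fun h => le_antisymm (map_le_iff_le_comap.2 h) fun v hv => ⟨f v, h v hv, hf v⟩⟩

theorem apply_mem_iff_of_injective {K V : Type*} [DivisionRing K] [AddCommGroup V] [Module K V]
    [FiniteDimensional K V] {f : V →ₗ[K] V} (hf : Function.Injective f) {p : Submodule K V}
    (hp : ∀ v ∈ p, f v ∈ p) (v : V) : f v ∈ p ↔ v ∈ p := by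
  have hmap : p.map f = p :=
    eq_of_le_of_finrank_le (map_le_iff_le_comap.2 hp)
      (equivMapOfInjective f hf p).finrank_eq.le
  refine ⟨fun hv => ?_, hp v⟩
  rw [← hmap, mem_map] at hv
  obtain ⟨u, hu, huv⟩ := hv
  exact hf huv ▸ hu

theorem mem_of_mem_span_of_X_smul_mem {R M : Type*} [CommSemiring R] [AddCommMonoid M]
    [Module R M] [Module R[X] M] [IsScalarTower R R[X] M] {S : Submodule R M}
    (hX : ∀ v ∈ S, (X : R[X]) • v ∈ S) {s : Set M} (hs : s ⊆ S) {v : M}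
    (hv : v ∈ span R[X] s) : v ∈ S := by
  have hsmul : ∀ (r : R[X]), ∀ v ∈ S, r • v ∈ S := by
    intro r
    induction r using Polynomial.induction_on with
    | C a => intro v hv; rw [← Polynomial.algebraMap_eq, algebraMap_smul]; exact S.smul_mem a hv
    | add p q hp hq => intro v hv; rw [add_smul]; exact S.add_mem (hp v hv) (hq v hv)
    | monomial n a ih =>
      intro v hv
      rw [pow_succ, ← mul_assoc, mul_comm _ X, mul_smul]
      exact hX _ (ih v hv)
  induction hv using span_induction with
  | mem x hx => exact hs hx
  | zero => exact S.zero_mem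
  | add x y _ _ hx hy => exact S.add_mem hx hy
  | smul r x _ hx => exact hsmul r x hx

end Submodule

section MultiTwisted

variable {F : Type*} [Field F] {ℓ : ℕ} {lam : Fin ℓ → F} {m : Fin ℓ → ℕ}

theorem blockShift_injective {lam : F} (hlam : lam ≠ 0) (n : ℕ) :
    Function.Injective (blockShift lam (m := n)) := by
  intro a b h
  funext j
  by_cases hj : (j : ℕ) + 1 < n
  · simpa [blockShift] using congrFun h ⟨j + 1, hj⟩
  · have h0 := congrFun h ⟨0, by omega⟩
    simp only [blockShift, if_true, mul_right_inj' hlam] at h0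
    rwa [show j = ⟨n - 1, by omega⟩ from Fin.ext (show (j : ℕ) = n - 1 by omega)]

variable (lam m) in
def multiShift : (∀ i, Fin (m i) → F) →ₗ[F] (∀ i, Fin (m i) → F) where
  toFun v i := blockShift (lam i) (v i)
  map_add' u v := by
    funext i j
    by_cases h : (j : ℕ) = 0 <;> simp [blockShift, h, mul_add]
  map_smul' c v := by
    funext i j
    by_cases h : (j : ℕ) = 0 <;> simp [blockShift, h, mul_left_comm]

theorem IsMT.multiShift_mem_iff (hlam : ∀ i, lam i ≠ 0) {CC : Submodule F (∀ i, Fin (m i) → F)}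
    (hC : IsMT lam CC) (v : ∀ i, Fin (m i) → F) : multiShift lam m v ∈ CC ↔ v ∈ CC :=
  Submodule.apply_mem_iff_of_injective (f := multiShift lam m)
    (fun _ _ h => funext fun i => blockShift_injective (hlam i) _ (congrFun h i)) hC v

variable (lam m) in
noncomputable def toCodeLinear : (Fin ℓ → F[X]) →ₗ[F] (∀ i, Fin (m i) → F) where
  toFun := toCode lam m
  map_add' u v := by
    funext i j
    simp [toCode, add_modByMonic]
  map_smul' c v := by
    funext i j
    simp [toCode, smul_modByMonic]

theorem toCode_surjective (hm : ∀ i, 0 < m i) : Function.Surjective (toCode lam m) := by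
  intro v
  refine ⟨fun i => ((degreeLTEquiv F (m i)).symm (v i) : F[X]), funext fun i => funext fun j => ?_⟩
  have hdeg := mem_degreeLT.1 ((degreeLTEquiv F (m i)).symm (v i)).2
  rw [toCode, (modByMonic_eq_self_iff (monic_X_pow_sub_C _ (hm i).ne')).2
    (by rwa [degree_X_pow_sub_C (hm i)])]
  exact congrFun ((degreeLTEquiv F (m i)).apply_symm_apply (v i)) j

theorem toCode_X_smul (hm : ∀ i, 0 < m i) (q : Fin ℓ → F[X]) :
    toCode lam m ((X : F[X]) • q) = multiShift lam m (toCode lam m q) := by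
  funext i j
  simp only [toCode, multiShift, blockShift, LinearMap.coe_mk, AddHom.coe_mk, Pi.smul_apply,
    smul_eq_mul]
  rw [coeff_X_mul_modByMonic_X_pow_sub_C (hm i) _ _ j.isLt]

theorem revWhole_involutive (hmm : ∀ i, m i = m i.rev) :
    Function.Involutive (revWhole (F := F) hmm) := by
  intro v
  funext i j
  have hmi := hmm i
  have hj := j.isLt
  simp only [revWhole, LinearMap.coe_mk, AddHom.coe_mk]
  congr 1
  · simp
  · rw [Fin.heq_ext_iff (by simp)]
    simp only [Fin.val_rev, Fin.rev_rev, Fin.val_cast]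
    omega

theorem multiShift_revWhole_multiShift (hlam : ∀ i, lam i ≠ 0) (hmm : ∀ i, m i = m i.rev)
    (hlamrev : ∀ i, lam i = (lam i.rev)⁻¹) (v : ∀ i, Fin (m i) → F) :
    multiShift lam m (revWhole hmm (multiShift lam m v)) = revWhole hmm v := by
  funext i j
  have hmi := hmm i
  have hj := j.isLt
  simp only [multiShift, revWhole, blockShift, LinearMap.coe_mk, AddHom.coe_mk, Fin.val_rev,
    Fin.val_cast]
  split_ifs with h0 hlast hlast
  · rw [hlamrev i, inv_mul_cancel_left₀ (hlam i.rev)]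
    congr 1; ext; simp only [Fin.val_rev, Fin.val_cast]; omega
  · omega
  · omega
  · congr 1; ext; simp only [Fin.val_rev, Fin.val_cast]; omega

theorem toCode_reflect (hm : ∀ i, 0 < m i) (hlam : ∀ i, lam i ≠ 0) (hmm : ∀ i, m i = m i.rev)
    (hlamrev : ∀ i, lam i = (lam i.rev)⁻¹) {q : Fin ℓ → F[X]} (hq : ∀ i, (q i).natDegree ≤ m i) :
    toCode lam m (fun i => reflect (m i.rev) (q i.rev)) =
      multiShift lam m (revWhole hmm (toCode lam m q)) := by
  funext i j
  have hmi := hmm i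
  have := j.isLt
  simp only [toCode, multiShift, revWhole, blockShift, LinearMap.coe_mk, AddHom.coe_mk,
    Fin.val_rev, Fin.val_cast]
  rw [← hmi, hlamrev i,
    coeff_reflect_modByMonic_X_pow_sub_C (hm i) (hlam i.rev) (hmi ▸ hq i.rev) j.isLt]
  split_ifs <;> congr 2 <;> omega

end MultiTwisted

section Reversibility

variable {F : Type*} [Field F] {ℓ : ℕ} {lam : Fin ℓ → F} {m : Fin ℓ → ℕ}
  {CC : Submodule F (∀ i, Fin (m i) → F)} {G : Matrix (Fin ℓ) (Fin ℓ) F[X]}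

theorem IsGPM.toCode_mem_iff (hG : IsGPM lam m CC G) (q : Fin ℓ → F[X]) :
    toCode lam m q ∈ CC ↔ q ∈ Submodule.span F[X] (Set.range G.row) :=
  (Set.ext_iff.1 hG.2 q).symm

theorem IsGPM.revWhole_mem_of_forall_row (hm : ∀ i, 0 < m i) (hlam : ∀ i, lam i ≠ 0)
    (hmm : ∀ i, m i = m i.rev) (hlamrev : ∀ i, lam i = (lam i.rev)⁻¹) (hC : IsMT lam CC)
    (hG : IsGPM lam m CC G) (hrows : ∀ a, revWhole hmm (toCode lam m (G a)) ∈ CC)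
    {v : ∀ i, Fin (m i) → F} (hv : v ∈ CC) : revWhole hmm v ∈ CC := by
  obtain ⟨q, rfl⟩ := toCode_surjective (lam := lam) hm v
  let S := CC.comap (revWhole hmm ∘ₗ toCodeLinear lam m)
  have hX : ∀ p ∈ S, (X : F[X]) • p ∈ S := fun p hp => by
    change revWhole hmm (toCode lam m (X • p)) ∈ CC
    rw [toCode_X_smul hm, ← hC.multiShift_mem_iff hlam,
      multiShift_revWhole_multiShift hlam hmm hlamrev]
    exact hp
  have hrowsS : Set.range G.row ⊆ S := by
    rintro _ ⟨a, rfl⟩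
    exact hrows a
  exact Submodule.mem_of_mem_span_of_X_smul_mem hX hrowsS ((hG.toCode_mem_iff q).1 hv)

theorem IsGPM.map_revWhole_eq_self_iff (hm : ∀ i, 0 < m i) (hlam : ∀ i, lam i ≠ 0)
    (hmm : ∀ i, m i = m i.rev) (hlamrev : ∀ i, lam i = (lam i.rev)⁻¹) (hC : IsMT lam CC)
    (hG : IsGPM lam m CC G) (hdeg : ∀ i j, (G i j).natDegree ≤ m j) :
    CC.map (revWhole hmm) = CC ↔
      ∀ a, (fun i => reflect (m i.rev) (G a i.rev)) ∈ Submodule.span F[X] (Set.range G.row) := by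
  have hrow : ∀ a, revWhole hmm (toCode lam m (G a)) ∈ CC ↔
      (fun i => reflect (m i.rev) (G a i.rev)) ∈ Submodule.span F[X] (Set.range G.row) := by
    intro a
    rw [← hC.multiShift_mem_iff hlam, ← toCode_reflect hm hlam hmm hlamrev (hdeg a),
      hG.toCode_mem_iff]
  rw [Submodule.map_eq_self_iff_of_involutive (revWhole_involutive hmm)]
  refine ⟨fun h a => (hrow a).1 (h _ ((hG.toCode_mem_iff _).2 (Submodule.subset_span ⟨a, rfl⟩))),
    fun h _ => hG.revWhole_mem_of_forall_row hm hlam hmm hlamrev hC fun a => (hrow a).2 (h a)⟩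

end Reversibility

/-- Let `C` be a Λ-MT code with GPM `G` and identical-equation matrix
`A`, with `mᵢ = m_{ℓ-i+1}` and `λᵢ = λ_{ℓ-i+1}⁻¹`, entries of column `j` of `G` of degree
at most `mⱼ`, and `N = lcm(tᵢ mᵢ)`.  Then `C` is reversible iff
`G(1/x)·diag(x^{mᵢ})·J_ℓ·diag((x^N-1)/(x^{mᵢ}-λᵢ))·A ≡ 0 (mod x^N-1)`. -/
theorem stmt19 {F : Type*} [Field F] [Fintype F] {ℓ : ℕ} {m : Fin ℓ → ℕ}
    (hm : ∀ i, 0 < m i) {lam : Fin ℓ → F} (hlam : ∀ i, lam i ≠ 0)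
    (hmm : ∀ i, m i = m i.rev) (hlamrev : ∀ i, lam i = (lam i.rev)⁻¹)
    (CC : Submodule F (∀ i, Fin (m i) → F)) (hC : IsMT lam CC)
    (G A : Matrix (Fin ℓ) (Fin ℓ) (Polynomial F)) (hG : IsGPM lam m CC G)
    (hA : A * G = Matrix.diagonal (fun i => X ^ (m i) - Polynomial.C (lam i)))
    (hdeg : ∀ i j, (G i j).natDegree ≤ m j)
    {N : ℕ} (hN : N = Finset.univ.lcm (fun i => orderOf (lam i) * m i)) :
    CC.map (revWhole hmm) = CC ↔
      ∀ i j : Fin ℓ, (X ^ N - 1 : Polynomial F) ∣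
        (((Matrix.of fun a b => Polynomial.reflect (m b) (G a b)) *
          (1 : Matrix (Fin ℓ) (Fin ℓ) (Polynomial F)).submatrix id Fin.rev *
          Matrix.diagonal (fun i => (X ^ N - 1) / (X ^ (m i) - Polynomial.C (lam i))) *
          A : Matrix (Fin ℓ) (Fin ℓ) (Polynomial F))) i j := by
  have hdvd : ∀ i, X ^ m i - C (lam i) ∣ (X ^ N - 1 : F[X]) := fun i =>
    X_pow_sub_C_dvd_X_pow_sub_one (hN ▸ Finset.dvd_lcm (Finset.mem_univ i))
  have hN0 : N ≠ 0 := by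
    rw [hN, Ne, Finset.lcm_eq_zero_iff]
    rintro ⟨i, -, hi⟩
    have hord := orderOf_pos (Units.mk0 (lam i) (hlam i))
    rw [← orderOf_units, Units.val_mk0] at hord
    exact Nat.mul_ne_zero hord.ne' (hm i).ne' hi
  have hc : (X ^ N - 1 : F[X]) ≠ 0 := by
    simpa using X_pow_sub_C_ne_zero (Nat.pos_of_ne_zero hN0) (1 : F)
  have hBG : Matrix.diagonal (fun i => (X ^ N - 1) / (X ^ (m i) - C (lam i))) * A * G =
      (X ^ N - 1 : F[X]) • 1 := by
    rw [Matrix.mul_assoc, hA, Matrix.diagonal_mul_diagonal, Matrix.smul_one_eq_diagonal]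
    refine congrArg Matrix.diagonal (funext fun i => ?_)
    rw [mul_comm, EuclideanDomain.mul_div_cancel' (X_pow_sub_C_ne_zero (hm i) _) (hdvd i)]
  rw [hG.map_revWhole_eq_self_iff hm hlam hmm hlamrev hC hdeg]
  refine forall_congr' fun a => ?_
  rw [Matrix.mem_span_row_iff_dvd_vecMul hc hG.1 hBG, ← Equiv.coe_refl, Matrix.mul_submatrix_one,
    Matrix.mul_assoc]
  rfl
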